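/- Let $A$ and $M$ be sets of positive integers and suppose $p_{A,M}(n)$ grows polynomially, i.e., there exist $k$ and $N_0$ with $p_{A,M}(n) \leq n^k$ for all $n \geq N_0$, and $M$ is infinite. Then it is not the case that $A(x) \geq c \log x$ for some $c > 0$ and all sufficiently large $x$ (with $A$ infinite). -/

import Mathlib

/-!
Suppose `A(x) ≥ c log x`. Fix `q > e^{(k+1)/c}` nonzero multiplicities from `M`, with maximum `B`.
Assigning them freely to the `s = A(X)` elements of `A` up to `X` gives `q^s` distinct
representations of integers in `[s, sBX]`, so polynomial growth of `p_{A,M}` yields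
`q^s ≤ (sBX)^{k+1}`. Since `X ≤ e^{s/c}`, the right side is at most `(Bs)^{k+1} e^{(k+1)s/c}`,
which is eventually smaller than `q^s`.
-/

open Filter

/-- `f` is a representation of `n` with parts in `A` and multiplicities in `M`:
`n = ∑ a ∈ A, m_a * a` with each nonzero multiplicity lying in `M`. -/
def IsRepr (A M : Set ℕ) (n : ℕ) (f : ℕ →₀ ℕ) : Prop :=
  (∀ a ∈ f.support, a ∈ A) ∧ (∀ a ∈ f.support, f a ∈ M) ∧ f.sum (fun a m => m * a) = n

/-- number of partitions of `n` with parts in `A` and multiplicities in `M` -/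
noncomputable def pAM (A M : Set ℕ) (n : ℕ) : ℕ :=
  Nat.card {f : ℕ →₀ ℕ // IsRepr A M n f}

/-- number of partitions of `n` with parts in `A` (unrestricted multiplicities) -/
noncomputable def pA (A : Set ℕ) (n : ℕ) : ℕ :=
  pAM A {m | 0 < m} n

/-- counting function of a set of positive integers -/
noncomputable def cnt (S : Set ℕ) (x : ℝ) : ℕ :=
  Nat.card {a : ℕ // a ∈ S ∧ (a : ℝ) ≤ x}

open Finset

namespace IsRepr

variable {A M : Set ℕ} {n : ℕ} {f : ℕ →₀ ℕ}

theorem mul_le (hf : IsRepr A M n f) {a : ℕ} (ha : a ∈ f.support) : f a * a ≤ n :=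
  hf.2.2 ▸ single_le_sum (f := fun a => f a * a) (fun _ _ => Nat.zero_le _) ha

theorem apply_le (hApos : ∀ a ∈ A, 0 < a) (hf : IsRepr A M n f) (a : ℕ) : f a ≤ n := by
  by_cases ha : a ∈ f.support
  · exact (Nat.le_mul_of_pos_right _ (hApos a (hf.1 a ha))).trans (hf.mul_le ha)
  · simp [Finsupp.notMem_support_iff.mp ha]

theorem le_of_mem_support (hf : IsRepr A M n f) {a : ℕ} (ha : a ∈ f.support) : a ≤ n :=
  (Nat.le_mul_of_pos_left a (Nat.pos_of_ne_zero (Finsupp.mem_support_iff.mp ha))).trans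
    (hf.mul_le ha)

end IsRepr

theorem setOf_isRepr_finite {A : Set ℕ} (hApos : ∀ a ∈ A, 0 < a) (M : Set ℕ) (n : ℕ) :
    {f | IsRepr A M n f}.Finite := by
  refine ((range (n + 1)).finsupp fun _ => range (n + 1)).finite_toSet.subset
    fun f (hf : IsRepr A M n f) => ?_
  rw [mem_coe, mem_finsupp_iff]
  exact ⟨fun a ha => mem_range_succ_iff.mpr (hf.le_of_mem_support ha),
    fun a _ => mem_range_succ_iff.mpr (hf.apply_le hApos a)⟩

theorem card_le_pAM {A M : Set ℕ} (hApos : ∀ a ∈ A, 0 < a) {n : ℕ} {T : Finset (ℕ →₀ ℕ)}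
    (hT : ∀ f ∈ T, IsRepr A M n f) : #T ≤ pAM A M n := by
  rw [pAM, ← Set.ncard_coe_finset]
  exact Set.ncard_le_ncard (fun f hf => hT f hf) (setOf_isRepr_finite hApos M n)

theorem card_pow_card_le_sum_pAM {A M : Set ℕ} (hApos : ∀ a ∈ A, 0 < a) {S Ms : Finset ℕ}
    (hS : ↑S ⊆ A) (hMs : ↑Ms ⊆ M) (hMs0 : 0 ∉ Ms) {B X : ℕ} (hSX : ∀ a ∈ S, a ≤ X)
    (hMsB : ∀ m ∈ Ms, m ≤ B) :
    #Ms ^ #S ≤ ∑ n ∈ Icc #S (#S * B * X), pAM A M n := by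
  classical
  set T := S.finsupp fun _ => Ms
  have hT : ∀ f ∈ T, f.support = S ∧ ∀ a ∈ S, f a ∈ Ms := by
    intro f hf
    obtain ⟨hsupp, hval⟩ := mem_finsupp_iff.mp hf
    refine ⟨hsupp.antisymm fun a ha => ?_, hval⟩
    exact Finsupp.mem_support_iff.mpr fun h => hMs0 (h ▸ hval a ha)
  have hrepr : ∀ f ∈ T, IsRepr A M (∑ a ∈ S, f a * a) f := by
    intro f hf
    obtain ⟨hsupp, hval⟩ := hT f hf
    refine ⟨fun a ha => hS (hsupp ▸ ha), fun a ha => hMs (hval a (hsupp ▸ ha)), ?_⟩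
    rw [Finsupp.sum, hsupp]
  have hmaps : (T : Set (ℕ →₀ ℕ)).MapsTo (fun f => ∑ a ∈ S, f a * a) (Icc #S (#S * B * X)) := by
    intro f hf
    obtain ⟨hsupp, hval⟩ := hT f hf
    refine mem_Icc.mpr ⟨card_eq_sum_ones S ▸ sum_le_sum fun a ha => ?_, ?_⟩
    · exact Nat.one_le_iff_ne_zero.mpr (Nat.mul_ne_zero (fun h => hMs0 (h ▸ hval a ha))
        (hApos a (hS ha)).ne')
    · calc ∑ a ∈ S, f a * a ≤ ∑ _a ∈ S, B * X :=
            sum_le_sum fun a ha => Nat.mul_le_mul (hMsB _ (hval a ha)) (hSX a ha)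
        _ = #S * B * X := by rw [sum_const, smul_eq_mul, mul_assoc]
  calc #Ms ^ #S = #T := by rw [card_finsupp, prod_const]
    _ = ∑ n ∈ Icc #S (#S * B * X), #{f ∈ T | ∑ a ∈ S, f a * a = n} :=
        card_eq_sum_card_fiberwise hmaps
    _ ≤ ∑ n ∈ Icc #S (#S * B * X), pAM A M n := by
        refine sum_le_sum fun n _ => card_le_pAM hApos fun f hf => ?_
        obtain ⟨hfT, rfl⟩ := mem_filter.mp hf
        exact hrepr f hfT

theorem sum_Icc_le_pow_succ {p : ℕ → ℕ} {k N₀ : ℕ} (hp : ∀ n, N₀ ≤ n → p n ≤ n ^ k)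
    {s : ℕ} (hN₀s : N₀ ≤ s) (hs : 1 ≤ s) (N : ℕ) : ∑ n ∈ Icc s N, p n ≤ N ^ (k + 1) :=
  calc ∑ n ∈ Icc s N, p n ≤ ∑ _n ∈ Icc s N, N ^ k := sum_le_sum fun n hn =>
        (hp n (hN₀s.trans (mem_Icc.mp hn).1)).trans (Nat.pow_le_pow_left (mem_Icc.mp hn).2 k)
    _ ≤ N * N ^ k := by
        rw [sum_const, smul_eq_mul, Nat.card_Icc]
        exact Nat.mul_le_mul_right _ (by omega)
    _ = N ^ (k + 1) := (pow_succ' N k).symm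

theorem eventually_mul_exp_pow_lt_pow {c q : ℝ} (C : ℝ) (k : ℕ)
    (hq : Real.exp (k / c) < q) :
    ∀ᶠ s : ℕ in atTop, (C * s * Real.exp (s / c)) ^ k < q ^ s := by
  set E := Real.exp (k / c)
  have hE : 0 < E := Real.exp_pos _
  have hr : 1 < q / E := (one_lt_div hE).mpr hq
  have hlim : Tendsto (fun s : ℕ => C ^ k * ((s : ℝ) ^ k / (q / E) ^ s)) atTop (nhds 0) := by
    simpa using (tendsto_pow_const_div_const_pow_of_one_lt k hr).const_mul (C ^ k)
  filter_upwards [hlim.eventually_lt_const one_pos] with s hs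
  have hexp : Real.exp (s / c) ^ k = E ^ s := by
    rw [← Real.exp_nat_mul, ← Real.exp_nat_mul]
    ring_nf
  rw [← mul_div_assoc, div_lt_one (pow_pos (zero_lt_one.trans hr) s)] at hs
  calc (C * s * Real.exp (s / c)) ^ k = C ^ k * (s : ℝ) ^ k * E ^ s := by rw [mul_pow, mul_pow, hexp]
    _ < (q / E) ^ s * E ^ s := mul_lt_mul_of_pos_right hs (pow_pos hE s)
    _ = q ^ s := by rw [← mul_pow, div_mul_cancel₀ q hE.ne']

theorem cnt_natCast (S : Set ℕ) [DecidablePred (· ∈ S)] (X : ℕ) :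
    cnt S X = #{a ∈ range (X + 1) | a ∈ S} := by
  rw [cnt, ← Nat.card_eq_finsetCard]
  exact Nat.card_congr (Equiv.subtypeEquivRight fun a => by simp [and_comm])

theorem stmt18_general (A M : Set ℕ) (hApos : ∀ a ∈ A, 0 < a)
    (hM : M.Infinite)
    (k N₀ : ℕ) (hpoly : ∀ n : ℕ, N₀ ≤ n → pAM A M n ≤ n ^ k) :
    ¬ ∃ c : ℝ, 0 < c ∧ ∀ᶠ x : ℝ in atTop, c * Real.log x ≤ cnt A x := by
  classical
  rintro ⟨c, hc, hev⟩
  obtain ⟨q, hq⟩ := exists_nat_gt (Real.exp ((k + 1 : ℕ) / c))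
  obtain ⟨Ms, hMs, rfl⟩ := (hM.sdiff (Set.finite_singleton 0)).exists_subset_card_eq q
  set B := Ms.sup id
  obtain ⟨s₀, hs₀⟩ := eventually_atTop.mp (eventually_mul_exp_pow_lt_pow (B : ℝ) (k + 1) hq)
  have hlog : Tendsto (fun X : ℕ => c * Real.log X) atTop atTop :=
    (Real.tendsto_log_atTop.comp tendsto_natCast_atTop_atTop).const_mul_atTop hc
  obtain ⟨X, hcnt, hlarge, hX⟩ := ((tendsto_natCast_atTop_atTop.eventually hev).and
    ((hlog.eventually_ge_atTop (max N₀ (max s₀ 1) : ℕ)).and (eventually_ge_atTop 1))).exists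
  set S := {a ∈ range (X + 1) | a ∈ A}
  have hS : (max N₀ (max s₀ 1) : ℕ) ≤ c * Real.log X ∧ c * Real.log X ≤ #S := by
    rw [← cnt_natCast]; exact ⟨hlarge, hcnt⟩
  obtain ⟨hN₀S, hs₀S, hS1⟩ : N₀ ≤ #S ∧ s₀ ≤ #S ∧ 1 ≤ #S := by
    simpa only [max_le_iff] using (by exact_mod_cast hS.1.trans hS.2 : max N₀ (max s₀ 1) ≤ #S)
  have hXexp : (X : ℝ) ≤ Real.exp (#S / c) := by
    rw [← Real.log_le_iff_le_exp (by exact_mod_cast hX), le_div_iff₀' hc]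
    exact hS.2
  have hcount : #Ms ^ #S ≤ (#S * B * X) ^ (k + 1) :=
    (card_pow_card_le_sum_pAM hApos (fun a ha => (mem_filter.mp ha).2) (fun m hm => (hMs hm).1)
      (fun h => (hMs h).2 rfl) (fun a ha => mem_range_succ_iff.mp (mem_filter.mp ha).1)
      (fun m hm => le_sup (f := id) hm)).trans (sum_Icc_le_pow_succ hpoly hN₀S hS1 _)
  have hcountℝ : (#Ms : ℝ) ^ #S ≤ ((#S : ℝ) * B * X) ^ (k + 1) := by exact_mod_cast hcount
  refine (hs₀ #S hs₀S).not_ge (hcountℝ.trans ?_)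
  rw [mul_comm (#S : ℝ)]
  gcongr

theorem stmt18 (A M : Set ℕ) (hApos : ∀ a ∈ A, 0 < a) (hMpos : ∀ m ∈ M, 0 < m)
    (hM : M.Infinite) (hA : A.Infinite)
    (k N₀ : ℕ) (hpoly : ∀ n : ℕ, N₀ ≤ n → pAM A M n ≤ n ^ k) :
    ¬ ∃ c : ℝ, 0 < c ∧ ∀ᶠ x : ℝ in atTop, c * Real.log x ≤ cnt A x :=
  stmt18_general A M hApos hM k N₀ hpoly
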